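/- arXiv:1810.13068 — 3 statements merged into one kernel-verified Lean document; each statement's English description precedes it below -/
import Mathlib

section
/- The function g : (0, ∞) → ℝ defined by g(x) = e^{1/x} · E₁(1/x), where E₁(t) = ∫_t^∞ e^{-u}/u du, is strictly monotonically increasing on (0, ∞). -/
open MeasureTheory Real Set

/-- The exponential integral `E₁ t = ∫ u in (t, ∞), e^{-u}/u du`. -/
noncomputable def expIntE1 (t : ℝ) : ℝ := ∫ u in Set.Ioi t, Real.exp (-u) / u

/-!
Substituting `u = s + t` gives `e^t E₁(t) = ∫₀^∞ e^{-s} / (s + t) ds`, whose integrand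
decreases strictly in `t`; so `t ↦ e^t E₁(t)` is strictly decreasing on `(0, ∞)`, and composing
with the strictly decreasing `x ↦ 1/x` makes `g` strictly increasing.
-/

theorem setIntegral_lt_setIntegral_of_forall_lt {X : Type*} [MeasurableSpace X] {μ : Measure X}
    {s : Set X} {f g : X → ℝ} (hs : MeasurableSet s) (hμs : μ s ≠ 0)
    (hf : IntegrableOn f s μ) (hg : IntegrableOn g s μ) (hlt : ∀ x ∈ s, f x < g x) :
    ∫ x in s, f x ∂μ < ∫ x in s, g x ∂μ := by
  have hnonneg : 0 ≤ᵐ[μ.restrict s] fun x => g x - f x := by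
    filter_upwards [ae_restrict_mem hs] with x hx
    exact sub_nonneg.2 (hlt x hx).le
  have hsupport : Function.support (fun x => g x - f x) ∩ s = s :=
    inter_eq_self_of_subset_right fun x hx => sub_ne_zero.2 (hlt x hx).ne'
  rw [← sub_pos, ← integral_sub hg hf,
    setIntegral_pos_iff_support_of_nonneg_ae hnonneg (hg.sub hf), hsupport]
  exact pos_iff_ne_zero.2 hμs

theorem integrableOn_exp_neg_div_add_Ioi {t : ℝ} (ht : 0 < t) :
    IntegrableOn (fun s => exp (-s) / (s + t)) (Ioi 0) := by
  have hmeas : AEStronglyMeasurable (fun s => exp (-s) / (s + t)) (volume.restrict (Ioi 0)) :=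
    (ContinuousOn.div (by fun_prop) (by fun_prop) fun s (hs : 0 < s) => by positivity)
      |>.aestronglyMeasurable measurableSet_Ioi
  refine ((exp_neg_integrableOn_Ioi 0 one_pos).div_const t).mono' hmeas ?_
  filter_upwards [ae_restrict_mem measurableSet_Ioi] with s (hs : 0 < s)
  rw [norm_of_nonneg (by positivity), neg_one_mul]
  exact div_le_div_of_nonneg_left (exp_pos _).le ht (by linarith)

theorem exp_mul_expIntE1_eq_integral (t : ℝ) :
    exp t * expIntE1 t = ∫ s in Ioi 0, exp (-s) / (s + t) := by
  have hshift : expIntE1 t = ∫ s in Ioi 0, exp (-(s + t)) / (s + t) := by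
    rw [expIntE1, ← (measurePreserving_add_right volume t).setIntegral_preimage_emb
      (measurableEmbedding_addRight t)]
    simp [preimage_add_const_Ioi]
  rw [hshift, ← integral_const_mul]
  congr 1 with s
  rw [neg_add, exp_add, exp_neg t]
  field_simp

theorem strictAntiOn_exp_mul_expIntE1 : StrictAntiOn (fun t => exp t * expIntE1 t) (Ioi 0) := by
  intro a (ha : 0 < a) b (hb : 0 < b) hab
  simp only [exp_mul_expIntE1_eq_integral]
  refine setIntegral_lt_setIntegral_of_forall_lt measurableSet_Ioi (by simp)
    (integrableOn_exp_neg_div_add_Ioi hb) (integrableOn_exp_neg_div_add_Ioi ha)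
    fun s (hs : 0 < s) => ?_
  exact div_lt_div_of_pos_left (exp_pos _) (by linarith) (by linarith)

/-- The function `g(x) = e^{1/x} E₁(1/x)` is strictly monotonically increasing on `(0, ∞)`. -/
theorem stmt_1 :
    StrictMonoOn (fun x : ℝ => Real.exp (1 / x) * expIntE1 (1 / x)) (Set.Ioi 0) := by
  simp only [one_div]
  exact strictAntiOn_exp_mul_expIntE1.comp strictAntiOn_inv_pos fun x (hx : 0 < x) => inv_pos.2 hx
end

section
/- Let Σ > 0 and μ₁, μ₂ ∈ ℝ, and set λ = μ₁² + μ₂². Let X and Y be independent real Gaussian random variables with X ~ N(μ₁, Σ) and Y ~ N(μ₂, Σ). Then the law of X² + Y² (i.e., the pushforward of the product measure (gaussianReal μ₁ Σ) × (gaussianReal μ₂ Σ) under the map (x, y) ↦ x² + y²) is absolutely continuous with respect to Lebesgue measure with density f(x) = (1/(2Σ)) · e^{-(x+λ)/(2Σ)} · I₀(√(xλ)/Σ) for x > 0 and f(x) = 0 for x ≤ 0; that is, for every Borel set A ⊆ ℝ, the pushforward measure of A equals ∫_{A ∩ (0,∞)} (1/(2Σ)) e^{-(x+λ)/(2Σ)}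 I₀(√(xλ)/Σ) dx. (Noncentral chi-square with 2 degrees of freedom, non-centrality λ, Gaussian variance parameter Σ.) -/
/-!
In polar coordinates `(r cos θ, r sin θ)` the product of the two Gaussian densities is
`(2πΣ)⁻¹ e^{-(r² + λ)/(2Σ)} e^{(r/Σ)(μ₁ cos θ + μ₂ sin θ)}`. Writing
`μ₁ cos θ + μ₂ sin θ = √λ cos (θ - φ)`, the angular integral is `∫_{-π}^{π} e^{R cos θ} dθ = 2π I₀(R)` with `R = r√λ/Σ`, which follows by
expanding the exponential and using `∫_{-π}^{π} cos^{2m} = 2π (2m)! / (4^m m!²)` (odd powers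
integrate to zero). The substitution `x = r²` then turns `r dr` into `dx / 2`.
-/

open MeasureTheory ProbabilityTheory Real Set

/-- Modified Bessel function of the first kind of order zero:
`I₀(x) = Σ_{m=0}^∞ (1/(m! m!)) (x/2)^{2m}`. -/
noncomputable def besselI0 (x : ℝ) : ℝ :=
  ∑' m : ℕ, (1 / ((Nat.factorial m : ℝ) * (Nat.factorial m : ℝ))) * (x / 2) ^ (2 * m)

open scoped Nat NNReal

lemma summable_besselI0 (x : ℝ) :
    Summable fun m : ℕ => 1 / ((m ! : ℝ) * m !) * (x / 2) ^ (2 * m) := by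
  refine (Real.summable_pow_div_factorial (x ^ 2 / 4)).of_nonneg_of_le
    (fun m => by rw [pow_mul]; positivity) fun m => ?_
  have h1 : (1 : ℝ) ≤ m ! := mod_cast Nat.one_le_iff_ne_zero.mpr (Nat.factorial_ne_zero m)
  rw [pow_mul, div_pow, one_div_mul_eq_div]
  gcongr
  · norm_num
  · exact le_mul_of_one_le_right (by positivity) h1

lemma integral_cos_pow_two_mul_add_one (m : ℕ) : ∫ θ in (-π)..π, cos θ ^ (2 * m + 1) = 0 := by
  induction m with
  | zero => simp
  | succ n ih =>
    rw [show 2 * (n + 1) + 1 = 2 * n + 1 + 2 by ring, integral_cos_pow]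
    simp [ih]

lemma integral_cos_pow_two_mul (m : ℕ) :
    ∫ θ in (-π)..π, cos θ ^ (2 * m) = 2 * π * ((2 * m)! / (4 ^ m * (m ! : ℝ) ^ 2)) := by
  induction m with
  | zero => simp [two_mul]
  | succ n ih =>
    rw [show 2 * (n + 1) = 2 * n + 2 by ring, integral_cos_pow, ih,
      Nat.factorial_succ (2 * n + 1), Nat.factorial_succ (2 * n), Nat.factorial_succ n]
    simp only [sin_pi, sin_neg, mul_zero]
    push_cast
    field_simp
    ring

lemma hasSum_integral_exp_mul_cos (R : ℝ) :
    HasSum (fun k : ℕ => R ^ k / k ! * ∫ θ in (-π)..π, cos θ ^ k)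
      (∫ θ in (-π)..π, exp (R * cos θ)) := by
  have hexp (x : ℝ) : HasSum (fun k : ℕ => x ^ k / k !) (exp x) := by
    rw [exp_eq_exp_ℝ]; exact NormedSpace.expSeries_div_hasSum_exp x
  simp_rw [← intervalIntegral.integral_const_mul]
  refine intervalIntegral.hasSum_integral_of_dominated_convergence (fun k _ => |R| ^ k / k !)
    (fun k => by fun_prop) (fun k => ae_of_all _ fun θ _ => ?_)
    (ae_of_all _ fun _ _ => Real.summable_pow_div_factorial _) intervalIntegrable_const
    (ae_of_all _ fun θ _ => ?_)
  · rw [norm_mul, norm_div, norm_pow, Real.norm_eq_abs, RCLike.norm_natCast, norm_pow,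
      Real.norm_eq_abs, div_mul_eq_mul_div, ← mul_pow]
    gcongr
    exact mul_le_of_le_one_right (abs_nonneg R) (abs_cos_le_one θ)
  · simpa only [mul_pow, div_mul_eq_mul_div] using hexp (R * cos θ)

lemma integral_exp_mul_cos (R : ℝ) :
    ∫ θ in (-π)..π, exp (R * cos θ) = 2 * π * besselI0 R := by
  set a := fun k : ℕ => R ^ k / k ! * ∫ θ in (-π)..π, cos θ ^ k
  have heven (m : ℕ) : a (2 * m) = 2 * π * (1 / ((m ! : ℝ) * m !) * (R / 2) ^ (2 * m)) := by
    simp only [a]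
    rw [integral_cos_pow_two_mul, div_pow, pow_mul (2 : ℝ)]
    field_simp
    ring
  have hodd : ∀ k ∉ range (2 * ·), a k = 0 := by
    intro k hk
    obtain ⟨m, rfl⟩ : Odd k := by simpa [← Nat.not_even_iff_odd, Even, ← two_mul, eq_comm] using hk
    simp [a, integral_cos_pow_two_mul_add_one]
  have hsum : HasSum (a ∘ (2 * ·)) (2 * π * besselI0 R) := by
    rw [besselI0]
    simpa only [Function.comp_def, heven] using ((summable_besselI0 R).hasSum.mul_left (2 * π))
  exact ((mul_right_injective₀ two_ne_zero).hasSum_iff hodd |>.mp hsum).unique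
    (hasSum_integral_exp_mul_cos R) |>.symm

lemma integral_exp_mul_cos_add_mul_sin (a b : ℝ) :
    ∫ θ in (-π)..π, exp (a * cos θ + b * sin θ) = 2 * π * besselI0 √(a ^ 2 + b ^ 2) := by
  set z : ℂ := a + b * Complex.I
  have ha : ‖z‖ * cos z.arg = a := by simp [z]
  have hb : ‖z‖ * sin z.arg = b := by simp [z]
  have hrot (θ : ℝ) : a * cos θ + b * sin θ = ‖z‖ * cos (θ - z.arg) := by
    rw [cos_sub, ← ha, ← hb]; ring
  have hper : Function.Periodic (fun θ => exp (‖z‖ * cos θ)) (2 * π) := fun θ => by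
    simp [cos_add_two_pi]
  simp_rw [hrot]
  rw [intervalIntegral.integral_comp_sub_right (fun θ => exp (‖z‖ * cos θ)),
    show π - z.arg = -π - z.arg + 2 * π by ring, hper.intervalIntegral_add_eq _ (-π),
    show -π + 2 * π = π by ring, integral_exp_mul_cos, Complex.norm_add_mul_I]

section Polar

variable {E : Type*} [NormedAddCommGroup E] [NormedSpace ℝ E]

lemma integral_eq_integral_Ioi_smul_integral_polar {f : ℝ × ℝ → E} (hf : Integrable f) :
    ∫ p, f p = ∫ r in Ioi 0, r • ∫ θ in (-π)..π, f (r * cos θ, r * sin θ) := by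
  have hderiv (p) (_ : p ∈ polarCoord.target) :
      HasFDerivWithinAt polarCoord.symm (fderivPolarCoordSymm p) polarCoord.target p :=
    (hasFDerivAt_polarCoord_symm p).hasFDerivWithinAt
  have hint : IntegrableOn (fun p : ℝ × ℝ => p.1 • f (polarCoord.symm p)) polarCoord.target := by
    have := (integrableOn_image_iff_integrableOn_abs_det_fderiv_smul volume
      polarCoord.open_target.measurableSet hderiv polarCoord.symm.injOn f).mp
    rw [polarCoord.symm_image_target_eq_source] at this
    refine (this hf.integrableOn).congr_fun (fun p hp => ?_) polarCoord.open_target.measurableSet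
    dsimp only
    rw [det_fderivPolarCoordSymm, abs_of_pos hp.1]
  rw [← integral_comp_polarCoord_symm, show polarCoord.target = Ioi 0 ×ˢ Ioo (-π) π from rfl,
    Measure.volume_eq_prod, setIntegral_prod _ hint]
  refine setIntegral_congr_fun measurableSet_Ioi fun r _ => ?_
  rw [integral_smul, intervalIntegral.integral_of_le (by linarith [pi_pos]),
    integral_Ioc_eq_integral_Ioo]
  rfl

lemma integral_preimage_sq_add_sq {f : ℝ × ℝ → E} (hf : Integrable f) {A : Set ℝ}
    (hA : MeasurableSet A) :
    ∫ p in (fun p : ℝ × ℝ => p.1 ^ 2 + p.2 ^ 2) ⁻¹' A, f p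
      = ∫ x in A ∩ Ioi 0, (2⁻¹ : ℝ) • ∫ θ in (-π)..π, f (√x * cos θ, √x * sin θ) := by
  set g : ℝ → E := fun x => (2⁻¹ : ℝ) • ∫ θ in (-π)..π, f (√x * cos θ, √x * sin θ)
  have hpre : MeasurableSet ((fun p : ℝ × ℝ => p.1 ^ 2 + p.2 ^ 2) ⁻¹' A) :=
    (by fun_prop : Measurable fun p : ℝ × ℝ => p.1 ^ 2 + p.2 ^ 2) hA
  -- the form required by `integral_comp_rpow_Ioi_of_pos`, for the substitution `x = r ^ 2`
  have hpolar (r : ℝ) (hr : 0 < r) :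
      r • ∫ θ in (-π)..π, ((fun p : ℝ × ℝ => p.1 ^ 2 + p.2 ^ 2) ⁻¹' A).indicator f
        (r * cos θ, r * sin θ) = (2 * r ^ ((2 : ℝ) - 1)) • A.indicator g (r ^ (2 : ℝ)) := by
    have hsq (θ : ℝ) : (r * cos θ) ^ 2 + (r * sin θ) ^ 2 = r ^ 2 := by
      linear_combination r ^ 2 * cos_sq_add_sin_sq θ
    simp only [rpow_two, show (2 : ℝ) - 1 = 1 by norm_num, rpow_one]
    by_cases hrA : r ^ 2 ∈ A
    · simp only [indicator_of_mem, mem_preimage, hsq, hrA, g, sqrt_sq hr.le, smul_smul]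
      congr 1; ring
    · simp [indicator_of_notMem, hsq, hrA]
  rw [← integral_indicator hpre, integral_eq_integral_Ioi_smul_integral_polar (hf.indicator hpre),
    setIntegral_congr_fun measurableSet_Ioi hpolar,
    integral_comp_rpow_Ioi_of_pos (g := A.indicator g) two_pos, integral_indicator hA,
    Measure.restrict_restrict hA]

end Polar

lemma gaussianReal_prod_apply {μ₁ μ₂ : ℝ} {v₁ v₂ : ℝ≥0} (hv₁ : v₁ ≠ 0) (hv₂ : v₂ ≠ 0)
    {s : Set (ℝ × ℝ)} (hs : MeasurableSet s) :
    (gaussianReal μ₁ v₁).prod (gaussianReal μ₂ v₂) s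
      = ENNReal.ofReal (∫ p in s, gaussianPDFReal μ₁ v₁ p.1 * gaussianPDFReal μ₂ v₂ p.2) := by
  have hint : Integrable fun p : ℝ × ℝ => gaussianPDFReal μ₁ v₁ p.1 * gaussianPDFReal μ₂ v₂ p.2 :=
    (integrable_gaussianPDFReal μ₁ v₁).mul_prod (integrable_gaussianPDFReal μ₂ v₂)
  rw [gaussianReal_of_var_ne_zero _ hv₁, gaussianReal_of_var_ne_zero _ hv₂,
    prod_withDensity (measurable_gaussianPDF _ _) (measurable_gaussianPDF _ _),
    withDensity_apply _ hs, ofReal_integral_eq_lintegral_ofReal hint.integrableOn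
      (ae_of_all _ fun _ => mul_nonneg (gaussianPDFReal_nonneg _ _ _) (gaussianPDFReal_nonneg _ _ _))]
  simp only [gaussianPDF, ENNReal.ofReal_mul (gaussianPDFReal_nonneg _ _ _)]
  rfl

/-- `v` is the variance of each Gaussian coordinate and `lam` the non-centrality parameter. -/
noncomputable def noncentralChiSqTwoPDFReal (v lam x : ℝ) : ℝ :=
  1 / (2 * v) * exp (-(x + lam) / (2 * v)) * besselI0 (√(x * lam) / v)

lemma half_integral_gaussianPDFReal_mul_polar (μ₁ μ₂ : ℝ) {v : ℝ≥0} (hv : 0 < v) {x : ℝ}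
    (hx : 0 ≤ x) :
    (2⁻¹ : ℝ) • ∫ θ in (-π)..π,
        gaussianPDFReal μ₁ v (√x * cos θ) * gaussianPDFReal μ₂ v (√x * sin θ)
      = noncentralChiSqTwoPDFReal v (μ₁ ^ 2 + μ₂ ^ 2) x := by
  have hv₀ : (0 : ℝ) < v := hv
  set r := √x
  have hxr : x = r ^ 2 := (sq_sqrt hx).symm
  have hpdf (θ : ℝ) : gaussianPDFReal μ₁ v (r * cos θ) * gaussianPDFReal μ₂ v (r * sin θ)
      = (2 * π * v)⁻¹ * exp (-(x + (μ₁ ^ 2 + μ₂ ^ 2)) / (2 * v))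
        * exp (r * μ₁ / v * cos θ + r * μ₂ / v * sin θ) := by
    simp only [gaussianPDFReal]
    rw [mul_assoc (2 * π * (v : ℝ))⁻¹, ← exp_add, mul_mul_mul_comm, ← mul_inv,
      mul_self_sqrt (by positivity), ← exp_add]
    congr 2
    field_simp
    linear_combination (-r ^ 2) * cos_sq_add_sin_sq θ + hxr
  have hnorm : √((r * μ₁ / v) ^ 2 + (r * μ₂ / v) ^ 2) = √(x * (μ₁ ^ 2 + μ₂ ^ 2)) / v := by
    have hsum : (r * μ₁ / v) ^ 2 + (r * μ₂ / v) ^ 2 = x * (μ₁ ^ 2 + μ₂ ^ 2) / v ^ 2 := by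
      rw [hxr]; field_simp
    rw [hsum, sqrt_div' _ (sq_nonneg _), sqrt_sq hv₀.le]
  simp_rw [hpdf]
  rw [intervalIntegral.integral_const_mul, integral_exp_mul_cos_add_mul_sin, hnorm,
    noncentralChiSqTwoPDFReal, smul_eq_mul]
  field_simp

/-- Noncentral chi-square with 2 degrees of freedom: if `X ~ N(μ₁, Sig)` and `Y ~ N(μ₂, Sig)`
are independent with `Sig > 0` (the Gaussian variance parameter, written `Σ` in the paper)
and `λ = μ₁² + μ₂²`, then the law of `X² + Y²` has density
`(1/(2Σ)) e^{-(x+λ)/(2Σ)} I₀(√(xλ)/Σ)` on `(0, ∞)` (and zero density on `(-∞, 0]`). -/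
theorem stmt_3 (μ₁ μ₂ : ℝ) (Sig : NNReal) (hSig : 0 < Sig) :
    ∀ A : Set ℝ, MeasurableSet A →
      (Measure.map (fun p : ℝ × ℝ => p.1 ^ 2 + p.2 ^ 2)
          ((gaussianReal μ₁ Sig).prod (gaussianReal μ₂ Sig))) A
        = ENNReal.ofReal (∫ x in A ∩ Set.Ioi (0 : ℝ),
            (1 / (2 * (Sig : ℝ))) * Real.exp (-(x + (μ₁ ^ 2 + μ₂ ^ 2)) / (2 * (Sig : ℝ)))
              * besselI0 (Real.sqrt (x * (μ₁ ^ 2 + μ₂ ^ 2)) / (Sig : ℝ))) := by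
  intro A hA
  have hT : Measurable fun p : ℝ × ℝ => p.1 ^ 2 + p.2 ^ 2 := by fun_prop
  rw [Measure.map_apply hT hA, gaussianReal_prod_apply hSig.ne' hSig.ne' (hT hA),
    integral_preimage_sq_add_sq
      ((integrable_gaussianPDFReal μ₁ Sig).mul_prod (integrable_gaussianPDFReal μ₂ Sig)) hA]
  exact congrArg ENNReal.ofReal <| setIntegral_congr_fun (hA.inter measurableSet_Ioi)
    fun x hx => half_integral_gaussianPDFReal_mul_polar μ₁ μ₂ hSig (le_of_lt hx.2)
end

section
/- For every real s > 0, the integral ∫₀^∞ (ln v) · e^{-v - s²} · I₀(2s√v) dv converges and equals ln(s²) + E₁(s²), where E₁(t) = ∫_t^∞ e^{-u}/u du; equivalently, the expected value of the natural logarithm of a noncentral chi-square random variable with 2 degrees of freedom and non-centrality parameter s², in the standard form with density e^{-v-s²}I₀(2s√v), equals q₁(s²) = ln(s²) - Ei(-s²). -/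
open MeasureTheory Real Set

namespace NcAux

open Filter Topology intervalIntegral

/-- Harmonic numbers. -/
noncomputable def H (m : ℕ) : ℝ := ∑ k ∈ Finset.range m, (1 : ℝ) / (k + 1)

/-- Log-moment integrals `∫₀^∞ (log v) v^m e^{-v} dv`. -/
noncomputable def EL (m : ℕ) : ℝ := ∫ v in Ioi (0 : ℝ), Real.log v * v ^ m * Real.exp (-v)

/-- `J t = ∫₀^t (1 - e^{-u})/u du`. -/
noncomputable def J (t : ℝ) : ℝ := ∫ u in (0 : ℝ)..t, (1 - Real.exp (-u)) / u

lemma H_succ (m : ℕ) : H (m + 1) = H m + 1 / (m + 1) := by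
  simp [H, Finset.sum_range_succ]

lemma H_nonneg (m : ℕ) : 0 ≤ H m := by
  refine Finset.sum_nonneg fun k _ => by positivity

lemma H_le (m : ℕ) : H m ≤ m := by
  calc H m ≤ ∑ k ∈ Finset.range m, (1 : ℝ) :=
        Finset.sum_le_sum fun k _ => by
          rw [div_le_one (by positivity)]; exact le_add_of_nonneg_left (Nat.cast_nonneg k)
    _ = m := by simp

lemma exp_tsum (x : ℝ) : Real.exp x = ∑' n : ℕ, x ^ n / n.factorial := by
  rw [Real.exp_eq_exp_ℝ, NormedSpace.exp_eq_tsum ℝ]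
  exact tsum_congr fun n => by rw [smul_eq_mul, div_eq_inv_mul]

lemma Irpow {r : ℝ} (hr : -1 < r) :
    IntegrableOn (fun v : ℝ => v ^ r * Real.exp (-v)) (Ioi 0) := by
  have := Real.GammaIntegral_convergent (s := r + 1) (by linarith)
  simpa [mul_comm, add_sub_cancel_right] using this

lemma Ipow (m : ℕ) : IntegrableOn (fun v : ℝ => v ^ m * Real.exp (-v)) (Ioi 0) := by
  have h := Irpow (r := (m : ℝ)) (by have : (0:ℝ) ≤ m := Nat.cast_nonneg m; linarith)
  refine h.congr_fun (fun v hv => ?_) measurableSet_Ioi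
  simp only [Real.rpow_natCast]

lemma Vpow (m : ℕ) : ∫ v in Ioi (0 : ℝ), v ^ m * Real.exp (-v) = m.factorial := by
  have h := (Real.Gamma_eq_integral (s := (m : ℝ) + 1) (by positivity)).symm
  rw [Real.Gamma_nat_eq_factorial] at h
  rw [← h]
  refine setIntegral_congr_fun measurableSet_Ioi fun v hv => ?_
  rw [add_sub_cancel_right, Real.rpow_natCast, mul_comm]

lemma Vhalf_eq : ∫ v in Ioi (0 : ℝ), v ^ (-(1/2) : ℝ) * Real.exp (-v) = Real.Gamma (1/2) := by
  rw [Real.Gamma_eq_integral (by norm_num : (0:ℝ) < 1/2)]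
  refine setIntegral_congr_fun measurableSet_Ioi fun v hv => ?_
  rw [mul_comm]
  norm_num

lemma Vhalf : ∫ v in Ioi (0 : ℝ), v ^ (-(1/2) : ℝ) * Real.exp (-v) ≤ 2 := by
  rw [Vhalf_eq, Real.Gamma_one_half_eq]
  rw [show (2:ℝ) = Real.sqrt 4 by
    rw [show (4:ℝ) = 2^2 by norm_num, Real.sqrt_sq (by norm_num)]]
  exact Real.sqrt_le_sqrt (by linarith [Real.pi_le_four])

lemma abs_log_le {v : ℝ} (hv : 0 < v) : |Real.log v| ≤ 2 * v ^ (-(1/2) : ℝ) + v := by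
  have hrp : (0:ℝ) < v ^ (-(1/2) : ℝ) := Real.rpow_pos_of_pos hv _
  rcases le_or_gt 1 v with h1 | h1
  · rw [abs_of_nonneg (Real.log_nonneg h1)]
    have := Real.log_le_sub_one_of_pos hv
    linarith
  · rw [abs_of_nonpos (Real.log_nonpos hv.le h1.le)]
    have hl : Real.log (v ^ (-(1/2) : ℝ)) ≤ v ^ (-(1/2) : ℝ) - 1 :=
      Real.log_le_sub_one_of_pos hrp
    rw [Real.log_rpow hv] at hl
    nlinarith

lemma rpow_mul_pow_le {v : ℝ} (hv : 0 < v) (m : ℕ) :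
    v ^ (-(1/2) : ℝ) * v ^ m ≤ v ^ (-(1/2) : ℝ) + v ^ m := by
  rcases le_or_gt v 1 with h1 | h1
  · have : v ^ m ≤ 1 := pow_le_one₀ hv.le h1
    nlinarith [Real.rpow_pos_of_pos hv (-(1/2) : ℝ), pow_nonneg hv.le m]
  · have : v ^ (-(1/2) : ℝ) ≤ 1 :=
      Real.rpow_le_one_of_one_le_of_nonpos h1.le (by norm_num)
    nlinarith [pow_pos (lt_trans zero_lt_one h1) m, Real.rpow_pos_of_pos hv (-(1/2) : ℝ)]

/-- Dominating function for `log v * v^m * e^{-v}`. -/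
noncomputable def D (m : ℕ) (v : ℝ) : ℝ :=
  2 * (v ^ (-(1/2) : ℝ) * Real.exp (-v)) + 2 * (v ^ m * Real.exp (-v))
    + v ^ (m + 1) * Real.exp (-v)

lemma D_int (m : ℕ) : IntegrableOn (D m) (Ioi 0) := by
  exact (((Irpow (by norm_num)).const_mul 2).add ((Ipow m).const_mul 2)).add (Ipow (m + 1))

lemma abs_le_D {v : ℝ} (hv : 0 < v) (m : ℕ) :
    |Real.log v * v ^ m * Real.exp (-v)| ≤ D m v := by
  have he : (0:ℝ) < Real.exp (-v) := Real.exp_pos _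
  have hvm : (0:ℝ) ≤ v ^ m := pow_nonneg hv.le m
  rw [abs_mul, abs_mul, abs_of_nonneg hvm, abs_of_nonneg he.le]
  have h1 : |Real.log v| * v ^ m * Real.exp (-v)
      ≤ (2 * v ^ (-(1/2) : ℝ) + v) * v ^ m * Real.exp (-v) := by
    gcongr
    exact abs_log_le hv
  refine h1.trans ?_
  have h2 : (2 * v ^ (-(1/2) : ℝ) + v) * v ^ m
      = 2 * (v ^ (-(1/2) : ℝ) * v ^ m) + v ^ (m + 1) := by ring
  rw [h2]
  have h3 := rpow_mul_pow_le hv m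
  unfold D
  nlinarith

lemma log_meas (m : ℕ) :
    AEStronglyMeasurable (fun v : ℝ => Real.log v * v ^ m * Real.exp (-v))
      (volume.restrict (Ioi 0)) :=
  ((Real.measurable_log.mul (measurable_id.pow_const m)).mul
    (Real.measurable_exp.comp measurable_neg)).aestronglyMeasurable

lemma Ilog (m : ℕ) :
    IntegrableOn (fun v : ℝ => Real.log v * v ^ m * Real.exp (-v)) (Ioi 0) := by
  refine (D_int m).mono' (log_meas m) ?_
  filter_upwards [ae_restrict_mem measurableSet_Ioi] with v hv
  exact abs_le_D hv m

lemma Klog (m : ℕ) :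
    ∫ v in Ioi (0 : ℝ), |Real.log v * v ^ m * Real.exp (-v)|
      ≤ 4 + 2 * m.factorial + (m + 1).factorial := by
  have h1 : ∫ v in Ioi (0 : ℝ), |Real.log v * v ^ m * Real.exp (-v)|
      ≤ ∫ v in Ioi (0 : ℝ), D m v := by
    refine setIntegral_mono_on (Ilog m).abs (D_int m) measurableSet_Ioi fun v hv => ?_
    exact abs_le_D hv m
  refine h1.trans ?_
  have h2 : ∫ v in Ioi (0 : ℝ), D m v
      = 2 * (∫ v in Ioi (0 : ℝ), v ^ (-(1/2) : ℝ) * Real.exp (-v))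
        + 2 * (∫ v in Ioi (0 : ℝ), v ^ m * Real.exp (-v))
        + ∫ v in Ioi (0 : ℝ), v ^ (m+1) * Real.exp (-v) := by
    have ha : IntegrableOn (fun v : ℝ => 2 * (v ^ (-(1/2) : ℝ) * Real.exp (-v))) (Ioi 0) :=
      (Irpow (by norm_num)).const_mul 2
    have hb : IntegrableOn (fun v : ℝ => 2 * (v ^ m * Real.exp (-v))) (Ioi 0) :=
      (Ipow m).const_mul 2
    have hc : IntegrableOn (fun v : ℝ => v ^ (m+1) * Real.exp (-v)) (Ioi 0) := Ipow (m+1)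
    unfold D
    have e1 := integral_add (μ := volume.restrict (Ioi 0)) (ha.add hb) hc
    have e2 := integral_add (μ := volume.restrict (Ioi 0)) ha hb
    have e3 := MeasureTheory.integral_const_mul (μ := volume.restrict (Ioi 0)) 2
      (fun v : ℝ => v ^ (-(1/2) : ℝ) * Real.exp (-v))
    have e4 := MeasureTheory.integral_const_mul (μ := volume.restrict (Ioi 0)) 2
      (fun v : ℝ => v ^ m * Real.exp (-v))
    simp only [Pi.add_apply] at e1 e2
    rw [e1, e2, e3, e4]
  rw [h2, Vpow m, Vpow (m+1)]
  have := Vhalf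
  linarith

lemma E1_integrable {t : ℝ} (ht : 0 < t) :
    IntegrableOn (fun u : ℝ => Real.exp (-u) / u) (Ioi t) := by
  have hexp : IntegrableOn (fun u : ℝ => Real.exp (-u)) (Ioi t) := by
    have := exp_neg_integrableOn_Ioi t zero_lt_one
    simpa using this
  refine (hexp.mul_const t⁻¹).mono'
    (((Real.measurable_exp.comp measurable_neg).div measurable_id).aestronglyMeasurable) ?_
  filter_upwards [ae_restrict_mem measurableSet_Ioi] with u hu
  have hu0 : 0 < u := ht.trans hu
  rw [Real.norm_eq_abs, abs_of_nonneg (by positivity)]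
  rw [div_eq_mul_inv]
  have hinv : u⁻¹ ≤ t⁻¹ := by
    rw [inv_le_inv₀ hu0 ht]
    exact hu.le
  exact mul_le_mul_of_nonneg_left hinv (Real.exp_pos _).le

lemma E1_split {a b : ℝ} (ha : 0 < a) (hab : a ≤ b) :
    expIntE1 a = (∫ u in a..b, Real.exp (-u) / u) + expIntE1 b := by
  have h1 : IntegrableOn (fun u : ℝ => Real.exp (-u) / u) (Ioc a b) :=
    (E1_integrable ha).mono_set Set.Ioc_subset_Ioi_self
  have h2 := E1_integrable (ha.trans_le hab)
  rw [expIntE1, ← Set.Ioc_union_Ioi_eq_Ioi hab,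
    setIntegral_union (Set.Ioc_disjoint_Ioi le_rfl) measurableSet_Ioi h1 h2,
    intervalIntegral.integral_of_le hab]
  rfl

lemma one_sub_exp_div_le {u : ℝ} (hu : 0 < u) :
    0 ≤ (1 - Real.exp (-u)) / u ∧ (1 - Real.exp (-u)) / u ≤ 1 := by
  have h1 : 1 - u ≤ Real.exp (-u) := by
    have := Real.add_one_le_exp (-u)
    linarith
  have h2 : Real.exp (-u) ≤ 1 := Real.exp_le_one_iff.mpr (by linarith)
  constructor
  · exact div_nonneg (by linarith) hu.le
  · rw [div_le_one hu]; linarith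

lemma Jint {a b : ℝ} (ha : 0 ≤ a) (hb : 0 ≤ b) :
    IntervalIntegrable (fun u : ℝ => (1 - Real.exp (-u)) / u) volume a b := by
  refine (_root_.intervalIntegrable_const (c := (1:ℝ))).mono_fun
    (((measurable_const.sub (Real.measurable_exp.comp measurable_neg)).div
      measurable_id).aestronglyMeasurable) ?_
  filter_upwards [ae_restrict_mem measurableSet_uIoc] with u hu
  have hu0 : 0 < u := lt_of_le_of_lt (le_min ha hb) hu.1
  rcases one_sub_exp_div_le hu0 with ⟨h0, h1⟩
  rw [Real.norm_eq_abs, abs_of_nonneg h0, norm_one]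
  exact h1

lemma intE1_interval {t : ℝ} (ht : 0 < t) :
    ∫ u in (1:ℝ)..t, Real.exp (-u) / u = expIntE1 1 - expIntE1 t := by
  rcases le_total 1 t with h | h
  · have := E1_split one_pos h
    linarith
  · have := E1_split ht h
    have hsym : ∫ u in (1:ℝ)..t, Real.exp (-u) / u
        = -∫ u in t..(1:ℝ), Real.exp (-u) / u := intervalIntegral.integral_symm t 1
    rw [hsym]
    linarith

lemma J_sub {t : ℝ} (ht : 0 < t) :
    J t - J 1 = Real.log t - (expIntE1 1 - expIntE1 t) := by
  have hadd : (∫ u in (0:ℝ)..1, (1 - Real.exp (-u)) / u)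
      + (∫ u in (1:ℝ)..t, (1 - Real.exp (-u)) / u) = J t :=
    intervalIntegral.integral_add_adjacent_intervals (Jint le_rfl zero_le_one)
      (Jint zero_le_one ht.le)
  have hne : ∀ u ∈ Set.uIcc (1:ℝ) t, u ≠ 0 := by
    intro u hu
    rcases Set.mem_uIcc.mp hu with ⟨h1, _⟩ | ⟨h1, _⟩ <;> intro h <;> rw [h] at h1 <;> linarith
  have h1int : IntervalIntegrable (fun u : ℝ => 1 / u) volume 1 t := by
    apply ContinuousOn.intervalIntegrable
    exact continuousOn_const.div continuousOn_id hne
  have h2int : IntervalIntegrable (fun u : ℝ => Real.exp (-u) / u) volume 1 t := by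
    apply ContinuousOn.intervalIntegrable
    exact (Real.continuous_exp.comp continuous_neg).continuousOn.div continuousOn_id hne
  have hsplit : ∫ u in (1:ℝ)..t, (1 - Real.exp (-u)) / u
      = (∫ u in (1:ℝ)..t, 1 / u) - ∫ u in (1:ℝ)..t, Real.exp (-u) / u := by
    rw [← intervalIntegral.integral_sub h1int h2int]
    refine intervalIntegral.integral_congr fun u hu => ?_
    rw [div_sub_div_same, sub_div]
  have hlog : ∫ u in (1:ℝ)..t, 1 / u = Real.log t := by
    rw [integral_one_div (fun h => hne 0 h rfl)]
    simp
  rw [← hadd, hsplit, hlog, intE1_interval ht, J]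
  ring

lemma tendsto_Ici_zero {f : ℝ → ℝ} (h : Tendsto f (𝓝[>] (0:ℝ)) (𝓝 0)) (h0 : f 0 = 0) :
    Tendsto f (𝓝[Ici 0] (0:ℝ)) (𝓝 0) := by
  have hs : (Ici (0:ℝ)) = {0} ∪ Ioi 0 := by
    ext x
    simp only [Set.mem_Ici, Set.mem_union, Set.mem_singleton_iff, Set.mem_Ioi]
    constructor
    · intro hx; rcases hx.lt_or_eq with h' | h'
      · exact Or.inr h'
      · exact Or.inl h'.symm
    · rintro (rfl | hx) <;> [exact le_rfl; exact hx.le]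
  rw [hs, nhdsWithin_union, nhdsWithin_singleton]
  refine Filter.Tendsto.sup ?_ h
  have := tendsto_pure_nhds f 0
  rwa [h0] at this

lemma log_mul_self_tendsto :
    Tendsto (fun v : ℝ => |Real.log v * v|) (𝓝[Ici 0] (0:ℝ)) (𝓝 0) := by
  refine tendsto_Ici_zero ?_ (by simp)
  have h := (tendsto_log_mul_rpow_nhdsGT_zero one_pos).abs
  simp only [abs_zero] at h
  refine h.congr fun v => ?_
  rw [Real.rpow_one]

lemma Ilog0' : IntegrableOn (fun v : ℝ => Real.log v * Real.exp (-v)) (Ioi 0) := by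
  have := Ilog 0
  simpa using this

lemma hasDerivAt_exp_neg (v : ℝ) :
    HasDerivAt (fun v : ℝ => Real.exp (-v)) (-Real.exp (-v)) v := by
  have h := (hasDerivAt_neg v).exp
  rw [mul_neg_one] at h
  exact h

lemma abs_one_sub_exp_le {v : ℝ} (hv : 0 ≤ v) : |1 - Real.exp (-v)| ≤ |v| := by
  have h1 : 1 - v ≤ Real.exp (-v) := by have := Real.add_one_le_exp (-v); linarith
  have h2 : Real.exp (-v) ≤ 1 := Real.exp_le_one_iff.mpr (by linarith)
  rw [abs_of_nonneg (by linarith), abs_of_nonneg hv]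
  linarith

lemma pieceA : ∫ v in Ioc (0:ℝ) 1, Real.log v * Real.exp (-v) = -(J 1) := by
  set F : ℝ → ℝ := fun v => Real.log v * (1 - Real.exp (-v)) with hF
  set F' : ℝ → ℝ := fun v => (1 - Real.exp (-v)) / v + Real.log v * Real.exp (-v) with hF'
  have hderiv : ∀ x ∈ Ioo (0:ℝ) 1, HasDerivWithinAt F (F' x) (Ioi x) x := by
    intro x hx
    have hx0 : (0:ℝ) < x := hx.1
    have h1 : HasDerivAt (fun v : ℝ => 1 - Real.exp (-v)) (Real.exp (-x)) x := by
      simpa using (hasDerivAt_exp_neg x).const_sub 1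
    have h2 := (Real.hasDerivAt_log hx0.ne').mul h1
    have : F' x = x⁻¹ * (1 - Real.exp (-x)) + Real.log x * Real.exp (-x) := by
      rw [hF']; field_simp
    rw [this]
    exact h2.hasDerivWithinAt
  have hcont : ContinuousOn F (Icc 0 1) := by
    intro x hx
    rcases hx.1.lt_or_eq with hx0 | hx0
    · exact ((Real.continuousAt_log hx0.ne').mul
        (continuous_const.sub (Real.continuous_exp.comp continuous_neg)).continuousAt
        ).continuousWithinAt
    · subst hx0
      have hb : ∀ᶠ v in 𝓝[Icc (0:ℝ) 1] 0, ‖F v‖ ≤ |Real.log v * v| := by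
        filter_upwards [self_mem_nhdsWithin] with v hv
        rw [hF]
        simp only [Real.norm_eq_abs, abs_mul]
        exact mul_le_mul_of_nonneg_left (abs_one_sub_exp_le hv.1) (abs_nonneg _)
      have hg : Tendsto (fun v : ℝ => |Real.log v * v|) (𝓝[Icc (0:ℝ) 1] 0) (𝓝 0) :=
        log_mul_self_tendsto.mono_left (nhdsWithin_mono (0:ℝ) Icc_subset_Ici_self)
      have h0 : F 0 = 0 := by simp [hF]
      rw [ContinuousWithinAt, h0]
      exact squeeze_zero_norm' hb hg
  have hi2 : IntervalIntegrable (fun v : ℝ => Real.log v * Real.exp (-v)) volume 0 1 := by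
    rw [intervalIntegrable_iff_integrableOn_Ioc_of_le zero_le_one]
    exact Ilog0'.mono_set Set.Ioc_subset_Ioi_self
  have hint : IntervalIntegrable F' volume 0 1 :=
    (Jint (le_refl (0:ℝ)) zero_le_one).add hi2
  have key := intervalIntegral.integral_eq_sub_of_hasDeriv_right_of_le zero_le_one hcont
    hderiv hint
  have hF1 : F 1 = 0 := by simp [hF]
  have hF0 : F 0 = 0 := by simp [hF]
  rw [hF1, hF0, sub_zero] at key
  have hsplit : ∫ y in (0:ℝ)..1, F' y
      = J 1 + ∫ y in (0:ℝ)..1, Real.log y * Real.exp (-y) := by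
    rw [J]
    exact intervalIntegral.integral_add (Jint (le_refl (0:ℝ)) zero_le_one) hi2
  rw [hsplit] at key
  rw [← intervalIntegral.integral_of_le zero_le_one]
  linarith

lemma pieceB : ∫ v in Ioi (1:ℝ), Real.log v * Real.exp (-v) = expIntE1 1 := by
  set f : ℝ → ℝ := fun v => Real.log v * Real.exp (-v) with hf
  set f' : ℝ → ℝ := fun v => Real.exp (-v) / v - Real.log v * Real.exp (-v) with hf'
  have hderiv : ∀ x ∈ Ici (1:ℝ), HasDerivAt f (f' x) x := by
    intro x hx
    have hx0 : (0:ℝ) < x := lt_of_lt_of_le zero_lt_one hx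
    have h2 := (Real.hasDerivAt_log hx0.ne').mul (hasDerivAt_exp_neg x)
    have : f' x = x⁻¹ * Real.exp (-x) + Real.log x * -Real.exp (-x) := by
      rw [hf']; field_simp; ring
    rw [this]
    exact h2
  have hfint : IntegrableOn (fun v : ℝ => Real.log v * Real.exp (-v)) (Ioi 1) :=
    Ilog0'.mono_set (Set.Ioi_subset_Ioi zero_le_one)
  have hint : IntegrableOn f' (Ioi 1) := (E1_integrable one_pos).sub hfint
  have htend : Tendsto f atTop (𝓝 0) := by
    refine squeeze_zero_norm' ?_ (by simpa using tendsto_pow_mul_exp_neg_atTop_nhds_zero 1)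
    filter_upwards [Filter.eventually_ge_atTop (1:ℝ)] with v hv
    have hv0 : (0:ℝ) < v := lt_of_lt_of_le zero_lt_one hv
    rw [hf]
    simp only [Real.norm_eq_abs, abs_mul, abs_of_nonneg (Real.exp_pos (-v)).le,
      abs_of_nonneg (Real.log_nonneg hv)]
    have : Real.log v ≤ v := by
      have := Real.log_le_sub_one_of_pos hv0; linarith
    exact mul_le_mul_of_nonneg_right this (Real.exp_pos _).le
  have key := integral_Ioi_of_hasDerivAt_of_tendsto' hderiv hint htend
  have hf1 : f 1 = 0 := by simp [hf]
  rw [hf1, sub_zero] at key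
  have hsplit : ∫ v in Ioi (1:ℝ), f' v
      = expIntE1 1 - ∫ v in Ioi (1:ℝ), Real.log v * Real.exp (-v) := by
    rw [hf', expIntE1]
    exact integral_sub (E1_integrable one_pos) hfint
  rw [hsplit] at key
  linarith

lemma c0_eq : EL 0 = -(J 1) + expIntE1 1 := by
  have h0 : EL 0 = ∫ v in Ioi (0:ℝ), Real.log v * Real.exp (-v) := by
    rw [EL]
    exact setIntegral_congr_fun measurableSet_Ioi fun v _ => by rw [pow_zero, mul_one]
  have hsplit : ∫ v in Ioi (0:ℝ), Real.log v * Real.exp (-v)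
      = (∫ v in Ioc (0:ℝ) 1, Real.log v * Real.exp (-v))
        + ∫ v in Ioi (1:ℝ), Real.log v * Real.exp (-v) := by
    rw [← Set.Ioc_union_Ioi_eq_Ioi zero_le_one]
    exact setIntegral_union (Set.Ioc_disjoint_Ioi le_rfl) measurableSet_Ioi
      (Ilog0'.mono_set Set.Ioc_subset_Ioi_self)
      (Ilog0'.mono_set (Set.Ioi_subset_Ioi zero_le_one))
  rw [h0, hsplit, pieceA, pieceB]

lemma EL_succ (m : ℕ) : EL (m + 1) = (m + 1) * EL m + m.factorial := by
  set F : ℝ → ℝ := fun v => Real.log v * v ^ (m+1) * Real.exp (-v) with hFdef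
  set F' : ℝ → ℝ := fun v => v ^ m * Real.exp (-v)
    + ((m:ℝ)+1) * (Real.log v * v ^ m * Real.exp (-v))
    - Real.log v * v ^ (m+1) * Real.exp (-v) with hF'def
  have hA : IntegrableOn (fun v : ℝ => v ^ m * Real.exp (-v)) (Ioi 0) := Ipow m
  have hB : IntegrableOn (fun v : ℝ => ((m:ℝ)+1) * (Real.log v * v ^ m * Real.exp (-v)))
      (Ioi 0) := (Ilog m).const_mul _
  have hderiv : ∀ x ∈ Ioi (0:ℝ), HasDerivAt F (F' x) x := by
    intro x hx
    have hx0 : (0:ℝ) < x := hx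
    have h1 : HasDerivAt (fun v : ℝ => Real.log v * v ^ (m+1))
        (x⁻¹ * x ^ (m+1) + Real.log x * (((m:ℝ)+1) * x ^ m)) x := by
      have := (Real.hasDerivAt_log hx0.ne').mul (hasDerivAt_pow (m+1) x)
      simp only [Nat.cast_add, Nat.cast_one, add_tsub_cancel_right] at this
      exact this
    have h2 := h1.mul (hasDerivAt_exp_neg x)
    have heq : F' x = (x⁻¹ * x ^ (m+1) + Real.log x * (((m:ℝ)+1) * x ^ m)) * Real.exp (-x)
        + Real.log x * x ^ (m+1) * -Real.exp (-x) := by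
      rw [hF'def]
      field_simp
      ring
    rw [heq]
    exact h2
  have hcont : ContinuousWithinAt F (Ici 0) 0 := by
    have h0 : F 0 = 0 := by simp [hFdef]
    rw [ContinuousWithinAt, h0]
    have hb : ∀ᶠ v in 𝓝[Ici (0:ℝ)] 0, ‖F v‖ ≤ |Real.log v * v| := by
      filter_upwards [Icc_mem_nhdsGE_of_mem (Set.left_mem_Ico.mpr zero_lt_one)] with v hv
      rw [hFdef]
      simp only [Real.norm_eq_abs, abs_mul]
      have h1 : |v ^ (m+1)| ≤ |v| := by
        rw [abs_of_nonneg (pow_nonneg hv.1 _), abs_of_nonneg hv.1]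
        calc v ^ (m+1) ≤ v ^ 1 := pow_le_pow_of_le_one hv.1 hv.2 (by omega)
          _ = v := pow_one v
      have h2 : |Real.exp (-v)| ≤ 1 := by
        rw [abs_of_nonneg (Real.exp_pos _).le]
        exact Real.exp_le_one_iff.mpr (by linarith [hv.1])
      calc |Real.log v| * |v ^ (m+1)| * |Real.exp (-v)| ≤ |Real.log v| * |v| * 1 :=
            mul_le_mul (mul_le_mul_of_nonneg_left h1 (abs_nonneg _)) h2 (abs_nonneg _)
              (by positivity)
        _ = |Real.log v| * |v| := by rw [mul_one]
    exact squeeze_zero_norm' hb log_mul_self_tendsto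
  have htop : Tendsto F atTop (𝓝 0) := by
    refine squeeze_zero_norm' ?_ (tendsto_pow_mul_exp_neg_atTop_nhds_zero (m+2))
    filter_upwards [Filter.eventually_ge_atTop (1:ℝ)] with v hv
    have hv0 : (0:ℝ) < v := lt_of_lt_of_le zero_lt_one hv
    have hlog : Real.log v ≤ v := by
      have := Real.log_le_sub_one_of_pos hv0; linarith
    rw [hFdef]
    simp only [Real.norm_eq_abs, abs_mul, abs_of_nonneg (Real.exp_pos (-v)).le,
      abs_of_nonneg (Real.log_nonneg hv), abs_of_nonneg (pow_nonneg hv0.le (m+1))]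
    calc Real.log v * v ^ (m+1) * Real.exp (-v) ≤ v * v ^ (m+1) * Real.exp (-v) := by
          gcongr
      _ = v ^ (m+2) * Real.exp (-v) := by ring
  have hF'int : IntegrableOn F' (Ioi 0) := (hA.add hB).sub (Ilog (m+1))
  have key := integral_Ioi_of_hasDerivAt_of_tendsto hcont hderiv hF'int htop
  have hF0 : F 0 = 0 := by simp [hFdef]
  rw [hF0, sub_zero] at key
  have e1 : ∫ v in Ioi (0:ℝ), F' v
      = (∫ v in Ioi (0:ℝ), (v ^ m * Real.exp (-v)
          + ((m:ℝ)+1) * (Real.log v * v ^ m * Real.exp (-v))))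
        - ∫ v in Ioi (0:ℝ), Real.log v * v ^ (m+1) * Real.exp (-v) :=
    integral_sub (hA.add hB) (Ilog (m+1))
  have e2 : (∫ v in Ioi (0:ℝ), (v ^ m * Real.exp (-v)
        + ((m:ℝ)+1) * (Real.log v * v ^ m * Real.exp (-v))))
      = (∫ v in Ioi (0:ℝ), v ^ m * Real.exp (-v))
        + ∫ v in Ioi (0:ℝ), ((m:ℝ)+1) * (Real.log v * v ^ m * Real.exp (-v)) :=
    integral_add hA hB
  have e3 := MeasureTheory.integral_const_mul (μ := volume.restrict (Ioi 0)) ((m:ℝ)+1)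
    (fun v : ℝ => Real.log v * v ^ m * Real.exp (-v))
  rw [e1, e2, e3, Vpow m] at key
  have hELm : EL m = ∫ v in Ioi (0:ℝ), Real.log v * v ^ m * Real.exp (-v) := rfl
  have hELm1 : EL (m+1) = ∫ v in Ioi (0:ℝ), Real.log v * v ^ (m+1) * Real.exp (-v) := rfl
  rw [← hELm, ← hELm1] at key
  linarith

lemma EL_eq (m : ℕ) : EL m = m.factorial * (H m + EL 0) := by
  induction m with
  | zero => simp [H]
  | succ m ih =>
      rw [EL_succ, ih, H_succ, Nat.factorial_succ]
      push_cast
      field_simp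
      ring

lemma geo (m : ℕ) {x : ℝ} (hx : x ∈ Ioc (0:ℝ) 1) :
    (1 - (1-x)^m)/x = ∑ k ∈ Finset.range m, (1-x)^k := by
  have hx0 : x ≠ 0 := ne_of_gt hx.1
  have h1 : (1 : ℝ) - x ≠ 1 := by
    intro h
    exact hx0 (by linarith)
  rw [geom_sum_eq h1, show (1:ℝ) - x - 1 = -x from by ring, div_neg, ← neg_div, neg_sub]

lemma H_integral (m : ℕ) :
    H m = ∫ x in Ioc (0:ℝ) 1, (1 - (1-x)^m)/x := by
  rw [show (∫ x in Ioc (0:ℝ) 1, (1 - (1-x)^m)/x)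
      = ∫ x in Ioc (0:ℝ) 1, ∑ k ∈ Finset.range m, (1-x)^k from
    setIntegral_congr_fun measurableSet_Ioc fun x hx => geo m hx]
  have hint : ∀ k ∈ Finset.range m, IntegrableOn (fun x : ℝ => (1-x)^k) (Ioc (0:ℝ) 1) :=
    fun k _ => (by continuity : Continuous fun x : ℝ => (1-x)^k).integrableOn_Ioc
  rw [integral_finset_sum _ hint]
  rw [H]
  refine Finset.sum_congr rfl fun k _ => ?_
  rw [← intervalIntegral.integral_of_le zero_le_one]
  have e := intervalIntegral.integral_comp_sub_left (a := (0:ℝ)) (b := 1)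
    (fun x : ℝ => x ^ k) 1
  simp only [sub_zero, sub_self] at e
  rw [e, integral_pow]
  norm_num

lemma frac_bounds {x : ℝ} (hx : x ∈ Ioc (0:ℝ) 1) (m : ℕ) :
    0 ≤ (1 - (1-x)^m)/x ∧ (1 - (1-x)^m)/x ≤ m := by
  have hx0 : (0:ℝ) < x := hx.1
  have h1 : (1-x)^m ≤ 1 := pow_le_one₀ (by linarith [hx.2]) (by linarith)
  have h2 : 1 - (m:ℝ)*x ≤ (1-x)^m := by
    have := one_add_mul_le_pow (a := -x) (by linarith [hx.2] : (-2:ℝ) ≤ -x) m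
    calc 1 - (m:ℝ)*x = 1 + (m:ℝ)*(-x) := by ring
      _ ≤ (1 + -x)^m := this
      _ = (1-x)^m := by ring_nf
  exact ⟨div_nonneg (by linarith) hx0.le, by rw [div_le_iff₀ hx0]; linarith⟩

lemma summable_mul_pow {t : ℝ} (ht : 0 ≤ t) :
    Summable (fun m : ℕ => (m:ℝ) * t ^ m / m.factorial) := by
  refine Summable.of_nonneg_of_le (fun m => by positivity)
    (fun m => ?_) (Real.summable_pow_div_factorial (2 * t))
  rw [mul_pow, div_le_div_iff_of_pos_right (by positivity)]
  gcongr
  exact_mod_cast (Nat.lt_two_pow_self (n := m)).le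

lemma sum_swap {t : ℝ} (ht : 0 < t) :
    ∑' m : ℕ, t ^ m * H m / m.factorial
      = ∫ x in Ioc (0:ℝ) 1, (Real.exp t - Real.exp (t*(1-x))) / x := by
  set φ : ℕ → ℝ → ℝ := fun m x => t ^ m / m.factorial * ((1 - (1-x)^m)/x) with hφ
  have hmeas : ∀ m, AEStronglyMeasurable (φ m) (volume.restrict (Ioc (0:ℝ) 1)) := fun m =>
    (((measurable_const.sub ((measurable_const.sub measurable_id).pow_const m)).div
      measurable_id).const_mul _).aestronglyMeasurable
  have hbound : ∀ m, ∀ x ∈ Ioc (0:ℝ) 1, ‖φ m x‖ ≤ (m:ℝ) * t ^ m / m.factorial := by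
    intro m x hx
    rcases frac_bounds hx m with ⟨h0, h1⟩
    rw [hφ]
    simp only [Real.norm_eq_abs]
    rw [abs_mul, abs_of_nonneg h0, abs_of_nonneg (by positivity : (0:ℝ) ≤ t ^ m / m.factorial)]
    calc t ^ m / m.factorial * ((1 - (1-x)^m)/x) ≤ t ^ m / m.factorial * m := by gcongr
      _ = (m:ℝ) * t ^ m / m.factorial := by ring
  have hlint : ∀ m, ∫⁻ x in Ioc (0:ℝ) 1, ‖φ m x‖₊
      ≤ ENNReal.ofReal ((m:ℝ) * t ^ m / m.factorial) := by
    intro m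
    have : ∫⁻ x in Ioc (0:ℝ) 1, ‖φ m x‖₊
        ≤ ∫⁻ _ in Ioc (0:ℝ) 1, ENNReal.ofReal ((m:ℝ) * t ^ m / m.factorial) := by
      refine lintegral_mono_ae ?_
      filter_upwards [ae_restrict_mem measurableSet_Ioc] with x hx
      rw [← enorm_eq_nnnorm, ← ofReal_norm_eq_enorm]
      exact ENNReal.ofReal_le_ofReal (hbound m x hx)
    refine this.trans ?_
    rw [lintegral_const, Measure.restrict_apply_univ, Real.volume_Ioc]
    simp [ENNReal.ofReal_one]
  have hsum : ∑' m, ∫⁻ x in Ioc (0:ℝ) 1, ‖φ m x‖₊ ≠ ⊤ := by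
    refine ne_top_of_le_ne_top ?_ (ENNReal.tsum_le_tsum hlint)
    rw [← ENNReal.ofReal_tsum_of_nonneg (fun m => by positivity) (summable_mul_pow ht.le)]
    exact ENNReal.ofReal_ne_top
  have hswap := integral_tsum hmeas hsum
  have hL : ∑' m : ℕ, t ^ m * H m / m.factorial = ∑' m, ∫ x in Ioc (0:ℝ) 1, φ m x := by
    refine tsum_congr fun m => ?_
    rw [hφ]
    rw [MeasureTheory.integral_const_mul (μ := volume.restrict (Ioc (0:ℝ) 1)) (t ^ m / m.factorial)
      (fun x : ℝ => (1 - (1-x)^m)/x), ← H_integral m]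
    ring
  rw [hL, ← hswap]
  refine setIntegral_congr_fun measurableSet_Ioc fun x hx => ?_
  have hx0 : (0:ℝ) < x := hx.1
  have hs1 : Summable (fun m : ℕ => t ^ m / m.factorial) := Real.summable_pow_div_factorial t
  have hs2 : Summable (fun m : ℕ => (t*(1-x)) ^ m / m.factorial) :=
    Real.summable_pow_div_factorial _
  have hterm : ∀ m : ℕ, φ m x = (t ^ m / m.factorial - (t*(1-x)) ^ m / m.factorial) / x := by
    intro m
    rw [hφ, mul_pow]
    field_simp
  calc ∑' m, φ m x = ∑' m, (t ^ m / m.factorial - (t*(1-x)) ^ m / m.factorial) / x :=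
        tsum_congr hterm
    _ = (∑' m, (t ^ m / m.factorial - (t*(1-x)) ^ m / m.factorial)) / x := by
        rw [tsum_div_const]
    _ = (Real.exp t - Real.exp (t*(1-x))) / x := by
        rw [Summable.tsum_sub hs1 hs2, ← exp_tsum, ← exp_tsum]

lemma subst {t : ℝ} (ht : 0 < t) :
    ∫ x in Ioc (0:ℝ) 1, (Real.exp t - Real.exp (t*(1-x))) / x = Real.exp t * J t := by
  rw [← intervalIntegral.integral_of_le zero_le_one]
  have e1 : ∫ x in (0:ℝ)..1, (Real.exp t - Real.exp (t*(1-x)))/x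
      = ∫ x in (0:ℝ)..1, t • ((Real.exp t - Real.exp (t - t*x))/(t*x)) := by
    refine intervalIntegral.integral_congr fun x hx => ?_
    rcases eq_or_ne x 0 with rfl | hx0
    · simp
    · rw [smul_eq_mul, show t*(1-x) = t - t*x by ring]
      field_simp
  rw [e1, intervalIntegral.integral_smul]
  have e2 := intervalIntegral.smul_integral_comp_mul_left (a := (0:ℝ)) (b := 1)
    (fun u : ℝ => (Real.exp t - Real.exp (t - u))/u) t
  simp only [mul_zero, mul_one] at e2
  rw [e2]
  have e3 : ∫ u in (0:ℝ)..t, (Real.exp t - Real.exp (t - u))/u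
      = ∫ u in (0:ℝ)..t, Real.exp t * ((1 - Real.exp (-u))/u) := by
    refine intervalIntegral.integral_congr fun u hu => ?_
    rcases eq_or_ne u 0 with rfl | hu0
    · simp
    · rw [Real.exp_sub, Real.exp_neg]
      field_simp
  rw [e3, intervalIntegral.integral_const_mul, J]

lemma sumH {t : ℝ} (ht : 0 < t) :
    ∑' m : ℕ, t ^ m * H m / m.factorial = Real.exp t * J t :=
  (sum_swap ht).trans (subst ht)

lemma summable_H (t : ℝ) (ht : 0 ≤ t) :
    Summable (fun m : ℕ => t ^ m * H m / m.factorial) := by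
  refine Summable.of_nonneg_of_le (fun m => by have := H_nonneg m; positivity)
    (fun m => ?_) (Real.summable_pow_div_factorial (2 * t))
  calc t ^ m * H m / m.factorial ≤ t ^ m * m / m.factorial := by
        gcongr
        exact H_le m
    _ ≤ (2 * t) ^ m / m.factorial := by
        rw [mul_pow, div_le_div_iff_of_pos_right (by positivity)]
        calc t ^ m * m ≤ t ^ m * 2 ^ m := by
              gcongr
              exact_mod_cast (Nat.lt_two_pow_self (n := m)).le
          _ = 2 ^ m * t ^ m := by ring
    _ = (2 * t) ^ m / m.factorial := by rw [mul_pow]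

open scoped ENNReal NNReal in
lemma integrable_tsum_helper {f : ℕ → ℝ → ℝ} {μ : Measure ℝ}
    (hf : ∀ i, AEStronglyMeasurable (f i) μ)
    (hf' : ∑' i, ∫⁻ a, ‖f i a‖₊ ∂μ ≠ ⊤) :
    Integrable (fun a => ∑' i, f i a) μ := by
  have hf'' : ∀ i, AEMeasurable (fun x => (‖f i x‖₊ : ℝ≥0∞)) μ := fun i => (hf i).enorm
  have hhh : ∀ᵐ a ∂μ, Summable fun n => (‖f n a‖₊ : ℝ) := by
    rw [← lintegral_tsum hf''] at hf'
    refine (ae_lt_top' (AEMeasurable.ennreal_tsum hf'') hf').mono ?_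
    intro x hx
    rw [← ENNReal.tsum_coe_ne_top_iff_summable_coe]
    exact hx.ne
  have hmeasρ : AEStronglyMeasurable (fun a => ∑' n, (‖f n a‖₊ : ℝ)) μ := by
    simp_rw [← NNReal.coe_tsum]
    rw [aestronglyMeasurable_iff_aemeasurable]
    apply AEMeasurable.coe_nnreal_real
    apply AEMeasurable.nnreal_tsum
    exact fun i => (hf i).nnnorm.aemeasurable
  have hfi : HasFiniteIntegral (fun a => ∑' n, (‖f n a‖₊ : ℝ)) μ := by
    dsimp [HasFiniteIntegral]
    have h1 : ∫⁻ a, ∑' n, ‖f n a‖₊ ∂μ < ⊤ := by rwa [lintegral_tsum hf'', lt_top_iff_ne_top]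
    convert h1 using 1
    apply lintegral_congr_ae
    filter_upwards [hhh] with a ha
    have hxx : (∑' n, |f n a|) = ((∑' n, ‖f n a‖₊ : ℝ≥0) : ℝ) := by
      rw [NNReal.coe_tsum]
      exact tsum_congr fun n => by rw [← Real.norm_eq_abs, ← coe_nnnorm]
    rw [hxx, enorm_eq_nnnorm, NNReal.nnnorm_eq]
    exact ENNReal.coe_tsum (NNReal.summable_coe.mp ha)
  have hρint : Integrable (fun a => ∑' n, (‖f n a‖₊ : ℝ)) μ := ⟨hmeasρ, hfi⟩
  have hmeas_tsum : AEStronglyMeasurable (fun a => ∑' i, f i a) μ := by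
    refine aestronglyMeasurable_of_tendsto_ae atTop
      (fun n : ℕ => (Finset.range n).aestronglyMeasurable_sum fun i _ => hf i) ?_
    filter_upwards [hhh] with a ha
    have hsum : Summable fun n => f n a := by
      refine Summable.of_norm ?_
      simpa [coe_nnnorm] using ha
    simpa only [Finset.sum_apply] using hsum.hasSum.tendsto_sum_nat
  refine hρint.mono' hmeas_tsum ?_
  filter_upwards [hhh] with a ha
  have hsn : Summable fun n => ‖f n a‖ := by simpa [coe_nnnorm] using ha
  calc ‖∑' i, f i a‖ ≤ ∑' i, ‖f i a‖ := norm_tsum_le_tsum_norm hsn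
    _ = ∑' n, (‖f n a‖₊ : ℝ) := by simp [coe_nnnorm]

end NcAux

open NcAux Filter in
/-- For every `s > 0`, the expected logarithm of a noncentral chi-square random variable
with 2 degrees of freedom and non-centrality `s²`:
`∫₀^∞ (ln v) e^{-v - s²} I₀(2s√v) dv = ln(s²) + E₁(s²)`. -/
theorem stmt_5 (s : ℝ) (hs : 0 < s) :
    IntegrableOn
      (fun v : ℝ => Real.log v * Real.exp (-v - s ^ 2) * besselI0 (2 * s * Real.sqrt v))
      (Set.Ioi 0) ∧
    ∫ v in Set.Ioi (0 : ℝ),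
        Real.log v * Real.exp (-v - s ^ 2) * besselI0 (2 * s * Real.sqrt v)
      = Real.log (s ^ 2) + expIntE1 (s ^ 2) := by
  set t : ℝ := s ^ 2 with htdef
  have ht : 0 < t := by positivity
  set g : ℕ → ℝ → ℝ := fun m v =>
    (t ^ m / ((m.factorial : ℝ) * m.factorial) * Real.exp (-t))
      * (Real.log v * v ^ m * Real.exp (-v)) with hgdef
  -- pointwise expansion
  have P1 : ∀ v ∈ Ioi (0:ℝ),
      Real.log v * Real.exp (-v - t) * besselI0 (2 * s * Real.sqrt v) = ∑' m, g m v := by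
    intro v hv
    have hb : besselI0 (2 * s * Real.sqrt v)
        = ∑' m : ℕ, (1 / ((m.factorial : ℝ) * m.factorial)) * (t ^ m * v ^ m) := by
      rw [besselI0]
      refine tsum_congr fun m => ?_
      have h1 : (2 * s * Real.sqrt v / 2) = s * Real.sqrt v := by ring
      have h2 : (s * Real.sqrt v) ^ 2 = t * v := by
        rw [mul_pow, Real.sq_sqrt (le_of_lt hv)]
      rw [h1, pow_mul, h2, mul_pow]
    rw [hb, ← tsum_mul_left]
    refine tsum_congr fun m => ?_
    rw [hgdef]
    rw [show -v - t = -v + -t from by ring, Real.exp_add]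
    ring
  have hmeas : ∀ m, AEStronglyMeasurable (g m) (volume.restrict (Ioi 0)) := fun m =>
    (log_meas m).const_mul _
  have hgint : ∀ m, Integrable (g m) (volume.restrict (Ioi 0)) := fun m =>
    ((Ilog m).const_mul _)
  set B : ℕ → ℝ := fun m =>
    t ^ m / ((m.factorial : ℝ) * m.factorial) * Real.exp (-t)
      * (4 + 2 * m.factorial + (m+1).factorial) with hBdef
  have hB : ∀ m, ∫ v in Ioi (0:ℝ), ‖g m v‖ ≤ B m := by
    intro m
    have hc : (0:ℝ) ≤ t ^ m / ((m.factorial : ℝ) * m.factorial) * Real.exp (-t) := by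
      positivity
    have e1 : ∀ v : ℝ, ‖g m v‖
        = (t ^ m / ((m.factorial : ℝ) * m.factorial) * Real.exp (-t))
          * |Real.log v * v ^ m * Real.exp (-v)| := by
      intro v
      rw [hgdef]
      rw [Real.norm_eq_abs, abs_mul, abs_of_nonneg hc]
    calc ∫ v in Ioi (0:ℝ), ‖g m v‖
        = (t ^ m / ((m.factorial : ℝ) * m.factorial) * Real.exp (-t))
          * ∫ v in Ioi (0:ℝ), |Real.log v * v ^ m * Real.exp (-v)| := by
          rw [← integral_const_mul]
          exact integral_congr_ae (Filter.Eventually.of_forall fun v => e1 v)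
      _ ≤ (t ^ m / ((m.factorial : ℝ) * m.factorial) * Real.exp (-t))
          * (4 + 2 * m.factorial + (m+1).factorial) := by
          exact mul_le_mul_of_nonneg_left (Klog m) hc
      _ = B m := rfl
  have hBle : ∀ m, B m ≤ 8 * ((2*t) ^ m / m.factorial) := by
    intro m
    have hf1 : (1:ℝ) ≤ (m.factorial : ℝ) := by exact_mod_cast m.factorial_pos
    have het : Real.exp (-t) ≤ 1 := Real.exp_le_one_iff.mpr (by linarith)
    have hm2 : (m:ℝ) < 2 ^ m := by exact_mod_cast Nat.lt_two_pow_self (n := m)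
    have h2m : (1:ℝ) ≤ 2 ^ m := one_le_pow₀ (by norm_num)
    have key : (4:ℝ) + 2 * m.factorial + (m+1).factorial
        ≤ 8 * 2 ^ m * m.factorial := by
      have : ((m+1).factorial : ℝ) = ((m:ℝ)+1) * m.factorial := by
        rw [Nat.factorial_succ]; push_cast; ring
      rw [this]
      nlinarith
    calc B m ≤ t ^ m / ((m.factorial : ℝ) * m.factorial) * 1
          * (8 * 2 ^ m * m.factorial) := by
          rw [hBdef]
          have h4 : (0:ℝ) ≤ t ^ m / ((m.factorial : ℝ) * m.factorial) := by positivity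
          exact mul_le_mul (mul_le_mul_of_nonneg_left het h4) key (by positivity)
            (by positivity)
      _ = 8 * ((2*t) ^ m / m.factorial) := by
          rw [mul_pow]
          field_simp
  have hBsum : Summable B :=
    Summable.of_nonneg_of_le (fun m => by rw [hBdef]; positivity) hBle
      ((Real.summable_pow_div_factorial (2*t)).mul_left 8)
  have hlsum : ∑' m, ∫⁻ v in Ioi (0:ℝ), ‖g m v‖₊ ≠ ⊤ := by
    have hle : ∀ m, ∫⁻ v in Ioi (0:ℝ), ‖g m v‖₊ ≤ ENNReal.ofReal (B m) := by
      intro m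
      rw [show (∫⁻ v in Ioi (0:ℝ), (‖g m v‖₊ : ENNReal)) = ∫⁻ v in Ioi (0:ℝ), ‖g m v‖ₑ from rfl,
        ← ofReal_integral_norm_eq_lintegral_enorm (hgint m)]
      exact ENNReal.ofReal_le_ofReal (hB m)
    refine ne_top_of_le_ne_top ?_ (ENNReal.tsum_le_tsum hle)
    rw [← ENNReal.ofReal_tsum_of_nonneg (fun m => by rw [hBdef]; positivity) hBsum]
    exact ENNReal.ofReal_ne_top
  have hae : (fun v : ℝ => Real.log v * Real.exp (-v - t) * besselI0 (2 * s * Real.sqrt v))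
      =ᵐ[volume.restrict (Ioi 0)] fun v => ∑' m, g m v := by
    filter_upwards [ae_restrict_mem measurableSet_Ioi] with v hv
    exact P1 v hv
  have hint : IntegrableOn
      (fun v : ℝ => Real.log v * Real.exp (-v - t) * besselI0 (2 * s * Real.sqrt v))
      (Ioi 0) := (integrable_tsum_helper hmeas hlsum).congr hae.symm
  refine ⟨hint, ?_⟩
  -- compute the integral
  have hswap := integral_tsum hmeas hlsum
  have e0 : ∫ v in Ioi (0:ℝ),
      Real.log v * Real.exp (-v - t) * besselI0 (2 * s * Real.sqrt v)
      = ∑' m, ∫ v in Ioi (0:ℝ), g m v := by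
    rw [integral_congr_ae hae]
    exact hswap
  have e1 : ∀ m : ℕ, ∫ v in Ioi (0:ℝ), g m v
      = Real.exp (-t) * (t ^ m * H m / m.factorial)
        + (Real.exp (-t) * EL 0) * (t ^ m / m.factorial) := by
    intro m
    have : ∫ v in Ioi (0:ℝ), g m v
        = (t ^ m / ((m.factorial : ℝ) * m.factorial) * Real.exp (-t)) * EL m := by
      rw [hgdef]
      exact integral_const_mul _ _
    rw [this, EL_eq m]
    have hf0 : ((m.factorial : ℝ)) ≠ 0 := by
      exact_mod_cast m.factorial_pos.ne'
    field_simp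
  have hs1 : Summable (fun m : ℕ => Real.exp (-t) * (t ^ m * H m / m.factorial)) :=
    (summable_H t ht.le).mul_left _
  have hs2 : Summable (fun m : ℕ => (Real.exp (-t) * EL 0) * (t ^ m / m.factorial)) :=
    (Real.summable_pow_div_factorial t).mul_left _
  have e2 : ∑' m, ∫ v in Ioi (0:ℝ), g m v
      = Real.exp (-t) * (Real.exp t * J t) + (Real.exp (-t) * EL 0) * Real.exp t := by
    rw [tsum_congr e1, Summable.tsum_add hs1 hs2, tsum_mul_left, tsum_mul_left, sumH ht,
      ← exp_tsum]
  have hexp : Real.exp (-t) * Real.exp t = 1 := by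
    rw [← Real.exp_add]; simp
  have e3 : ∑' m, ∫ v in Ioi (0:ℝ), g m v = J t + EL 0 := by
    rw [e2]
    calc Real.exp (-t) * (Real.exp t * J t) + Real.exp (-t) * EL 0 * Real.exp t
        = (Real.exp (-t) * Real.exp t) * J t + (Real.exp (-t) * Real.exp t) * EL 0 := by ring
      _ = J t + EL 0 := by rw [hexp]; ring
  rw [e0, e3]
  have h1 := c0_eq
  have h2 := J_sub ht
  linarith
end
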